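/- arXiv:2310.03864 — 5 statements merged into one kernel-verified Lean document; each statement's English description precedes it below -/
import Mathlib

section
/- Let κ be an uncountable cardinal. There exists a concentrated set in P(ω) of cardinality κ if and only if there exists a K-Lusin set in [ω]^ω of cardinality κ. -/
open Filter Set

/- The Cantor-space topology on `Set ℕ` (`P(ω)`), induced by identifying a set with its
characteristic function in `ℕ → Bool` (product topology, `Bool` discrete). -/
noncomputable instance cantorTopology : TopologicalSpace (Set ℕ) :=
  TopologicalSpace.induced
    (fun s : Set ℕ => fun n : ℕ => @decide (n ∈ s) (Classical.propDecidable _)) inferInstance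
def ConcentratedOn (X D : Set (Set ℕ)) : Prop :=
  ∀ U : Set (Set ℕ), IsOpen U → D ⊆ U → (X \ U).Countable

def Concentrated (X : Set (Set ℕ)) : Prop :=
  ¬ X.Countable ∧ ∃ D ⊆ X, D.Countable ∧ ConcentratedOn X D

def KLusin (X : Set (Set ℕ)) : Prop :=
  X ⊆ {s : Set ℕ | s.Infinite} ∧ ¬ X.Countable ∧
    ∀ K : Set (Set ℕ), K ⊆ {s : Set ℕ | s.Infinite} → IsCompact K → (X ∩ K).Countable

/-! Enumerate a countable set `Q ⊇ D` as `q 0, q 1, …`. For `s ∉ Q` and every `k` let `n_k(s) ≥ k`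
be the least length below which `s` differs from each of `q 0, …, q k`. The triples
`(k, n_k(s), m)`, with `m ≤ n_k(s)` recording `s` below `n_k(s)`, code a set of naturals that
depends continuously on `s`, determines `s`, and is infinite; for `s = q j` the level `n_k(s)`
exists only for `k < j`, so `Q` is sent to finite sets. A compact subset of `[ω]^ω` thus pulls back
to a closed set missing `D`, which a set concentrated on `D` meets in a countable set; hence the
image of `X \ Q` is `K`-Lusin. Conversely, for `Y` `K`-Lusin, `Y ∪ Fin` is concentrated on `Fin`
because a closed set avoiding `Fin` is a compact subset of `[ω]^ω`. -/

open Cardinal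

namespace Cardinal

theorem mk_diff_of_countable {α : Type*} {X C : Set α} (hX : ¬X.Countable) (hC : C.Countable) :
    #(X \ C : Set α) = #X := by
  have hX' : ℵ₀ < #X := not_le.mp (mt le_aleph0_iff_set_countable.mp hX)
  have hXC : #(X ∩ C : Set α) < #X :=
    (le_aleph0_iff_set_countable.mpr (hC.mono inter_subset_right)).trans_lt hX'
  refine eq_of_add_eq_of_aleph0_le ?_ hXC hX'.le
  rw [add_comm, ← mk_sdiff_add_mk (inter_subset_left : X ∩ C ⊆ X), sdiff_self_inter]

theorem mk_union_of_countable {α : Type*} {X C : Set α} (hX : ¬X.Countable) (hC : C.Countable) :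
    #(X ∪ C : Set α) = #X := by
  rw [← mk_diff_of_countable (fun h => hX (h.mono subset_union_left)) hC, union_sdiff_right,
    mk_diff_of_countable hX hC]

end Cardinal

theorem concentratedOn_iff_countable_inter {X D : Set (Set ℕ)} :
    ConcentratedOn X D ↔ ∀ F, IsClosed F → Disjoint D F → (X ∩ F).Countable := by
  refine ⟨fun h F hF hDF => ?_, fun h U hU hDU => ?_⟩
  · simpa only [sdiff_compl] using h Fᶜ hF.isOpen_compl (subset_compl_iff_disjoint_right.mpr hDF)
  · simpa only [sdiff_eq] using h Uᶜ hU.isClosed_compl (disjoint_compl_right_iff_subset.mpr hDU)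

noncomputable def cantorHomeomorph : Set ℕ ≃ₜ (ℕ → Bool) :=
  Equiv.toHomeomorphOfIsInducing
    { toFun := fun s n => @decide (n ∈ s) (Classical.propDecidable _)
      invFun := fun f => {n | f n = true}
      left_inv := fun s => by ext n; simp
      right_inv := fun f => by ext n; simp }
    ⟨rfl⟩

instance : CompactSpace (Set ℕ) := cantorHomeomorph.symm.compactSpace

instance : T2Space (Set ℕ) := cantorHomeomorph.isEmbedding.t2Space

theorem continuous_iff_isClopen_setOf_mem {X : Type*} [TopologicalSpace X] {g : X → Set ℕ} :
    Continuous g ↔ ∀ m, IsClopen {x | m ∈ g x} := by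
  refine continuous_induced_rng.trans (continuous_pi_iff.trans (forall_congr' fun m => ?_))
  rw [continuous_bool_rng true]
  simp [preimage]

theorem inter_Iio_eq_of_le {s t : Set ℕ} {m n : ℕ} (h : s ∩ Iio n = t ∩ Iio n) (hm : m ≤ n) :
    s ∩ Iio m = t ∩ Iio m := by
  rw [← inter_eq_right.mpr (Iio_subset_Iio hm), ← inter_assoc, h, inter_assoc]

theorem isOpen_of_inter_Iio_eq {A : Set (Set ℕ)} (n : ℕ)
    (hA : ∀ s t, s ∩ Iio n = t ∩ Iio n → s ∈ A → t ∈ A) : IsOpen A := by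
  let restrict : Set ℕ → (Fin n → Bool) := fun s i => cantorHomeomorph s i
  have hrestrict : Continuous restrict :=
    continuous_pi fun i => (continuous_apply (i : ℕ)).comp cantorHomeomorph.continuous
  suffices A = restrict ⁻¹' (restrict '' A) from this ▸ (isOpen_discrete _).preimage hrestrict
  refine (subset_preimage_image _ _).antisymm ?_
  rintro t ⟨s, hs, hst⟩
  refine hA s t (ext fun m => and_congr_left fun hm => ?_) hs
  simpa [restrict, cantorHomeomorph] using congrFun hst ⟨m, hm⟩

theorem isClopen_of_inter_Iio_eq {A : Set (Set ℕ)} (n : ℕ)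
    (hA : ∀ s t, s ∩ Iio n = t ∩ Iio n → s ∈ A → t ∈ A) : IsClopen A :=
  ⟨isOpen_compl_iff.mp <| isOpen_of_inter_Iio_eq n fun s t hst hs ht => hs (hA t s hst.symm ht),
    isOpen_of_inter_Iio_eq n hA⟩

theorem eventually_inter_Iio_ne {s t : Set ℕ} (h : s ≠ t) :
    ∀ᶠ n in atTop, s ∩ Iio n ≠ t ∩ Iio n := by
  obtain ⟨m, hm⟩ : ∃ m, ¬(m ∈ s ↔ m ∈ t) := by
    by_contra! hst
    exact h (ext hst)
  filter_upwards [eventually_gt_atTop m] with n hn hst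
  simpa [hn] using hm (by simpa [hn] using congrArg (m ∈ ·) hst)

section SeparationMap

variable (q : ℕ → Set ℕ)

def separationLevels (s : Set ℕ) (k : ℕ) : Set ℕ :=
  {n | k ≤ n ∧ ∀ i ≤ k, s ∩ Iio n ≠ q i ∩ Iio n}

def separationCode (s : Set ℕ) : Set (ℕ × ℕ × ℕ) :=
  {x | IsLeast (separationLevels q s x.1) x.2.1 ∧ x.2.2 ∈ insert x.2.1 (s ∩ Iio x.2.1)}

def separationMap (s : Set ℕ) : Set ℕ :=
  (Denumerable.eqv (ℕ × ℕ × ℕ)).symm ⁻¹' separationCode q s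

variable {q}

theorem exists_isLeast_separationLevels {s : Set ℕ} (hs : s ∉ range q) (k : ℕ) :
    ∃ n, IsLeast (separationLevels q s k) n := by
  have hne : ∀ᶠ n in atTop, ∀ i ∈ Iic k, s ∩ Iio n ≠ q i ∩ Iio n :=
    (finite_Iic k).eventually_all.mpr fun i _ => eventually_inter_Iio_ne fun h => hs ⟨i, h.symm⟩
  exact ⟨_, isLeast_csInf ((eventually_ge_atTop k).and hne).exists⟩

theorem IsLeast.separationLevels_of_inter_Iio_eq {s t : Set ℕ} {k n : ℕ}
    (hs : IsLeast (separationLevels q s k) n) (h : s ∩ Iio n = t ∩ Iio n) :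
    IsLeast (separationLevels q t k) n := by
  have key : ∀ n' ≤ n, n' ∈ separationLevels q s k ↔ n' ∈ separationLevels q t k :=
    fun n' hn' => by simp only [separationLevels, mem_ofPred_eq, inter_Iio_eq_of_le h hn']
  refine ⟨(key n le_rfl).mp hs.1, fun n' hn' => le_of_not_gt fun hlt => ?_⟩
  exact (hs.2 ((key n' hlt.le).mpr hn')).not_gt hlt

theorem separationCode_mem_of_inter_Iio_eq {s t : Set ℕ} {x : ℕ × ℕ × ℕ}
    (hx : x ∈ separationCode q s) (h : s ∩ Iio x.2.1 = t ∩ Iio x.2.1) :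
    x ∈ separationCode q t := by
  refine ⟨hx.1.separationLevels_of_inter_Iio_eq h, ?_⟩
  rw [← h]
  exact hx.2

theorem continuous_separationMap : Continuous (separationMap q) :=
  continuous_iff_isClopen_setOf_mem.mpr fun c =>
    isClopen_of_inter_Iio_eq ((Denumerable.eqv (ℕ × ℕ × ℕ)).symm c).2.1 fun _ _ h hs => separationCode_mem_of_inter_Iio_eq hs h

theorem finite_separationCode (j : ℕ) : (separationCode q (q j)).Finite := by
  have hlt : ∀ x ∈ separationCode q (q j), x.1 < j := fun x hx =>
    not_le.mp fun hjx => hx.1.1.2 j hjx rfl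
  have hsub : ∀ k, {n | IsLeast (separationLevels q (q j) k) n}.Subsingleton :=
    fun k _ h _ h' => h.unique h'
  refine ((finite_Iio j).biUnion fun k _ => (hsub k).finite.biUnion fun n _ =>
    (finite_singleton k).prod ((finite_singleton n).prod (finite_Iic n))).subset ?_
  rintro ⟨k, n, m⟩ hx
  simp only [mem_iUnion, mem_prod, mem_singleton_iff, mem_Iio, mem_Iic]
  exact ⟨k, hlt _ hx, n, hx.1, rfl, rfl, by
    rcases hx.2 with h | ⟨-, hm⟩
    exacts [h.le, hm.le]⟩

theorem infinite_separationCode {s : Set ℕ} (hs : s ∉ range q) :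
    (separationCode q s).Infinite := by
  choose n hn using exists_isLeast_separationLevels hs
  exact infinite_of_injective_forall_mem (f := fun k => (k, n k, n k))
    (fun k k' h => (Prod.mk.inj h).1) fun k => ⟨hn k, mem_insert _ _⟩

theorem injOn_separationCode : InjOn (separationCode q) (range q)ᶜ := by
  intro s hs t ht hst
  ext m
  obtain ⟨n, hn⟩ := exists_isLeast_separationLevels hs (m + 1)
  have hmn : m < n := hn.1.1
  have ht' : IsLeast (separationLevels q t (m + 1)) n := by
    have : (m + 1, n, n) ∈ separationCode q t := hst ▸ ⟨hn, mem_insert _ _⟩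
    exact this.1
  have := congrArg ((m + 1, n, m) ∈ ·) hst
  simpa [separationCode, hn, ht', hmn, hmn.ne] using this

theorem finite_separationMap (j : ℕ) : (separationMap q (q j)).Finite :=
  (finite_separationCode j).preimage (Denumerable.eqv _).symm.injective.injOn

theorem infinite_separationMap {s : Set ℕ} (hs : s ∉ range q) : (separationMap q s).Infinite :=
  (infinite_separationCode hs).preimage fun x _ => (Denumerable.eqv _).symm.surjective x

theorem injOn_separationMap : InjOn (separationMap q) (range q)ᶜ :=
  (preimage_injective.mpr (Denumerable.eqv _).symm.surjective).comp_injOn injOn_separationCode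

end SeparationMap

theorem countable_setOf_finite {α : Type*} [Countable α] : {s : Set α | s.Finite}.Countable :=
  (countable_range ((↑) : Finset α → Set α)).mono fun _ hs => mem_range.mpr ⟨_, hs.coe_toFinset⟩

theorem Concentrated.exists_kLusin_mk_eq {X : Set (Set ℕ)} (hX : Concentrated X) :
    ∃ Y, KLusin Y ∧ #Y = #X := by
  obtain ⟨hXunc, D, -, hD, hXD⟩ := hX
  obtain ⟨q, hq⟩ := (hD.insert ∅).exists_eq_range (insert_nonempty _ _)
  have hDq : D ⊆ range q := hq ▸ subset_insert _ _
  have hinj : InjOn (separationMap q) (X \ range q) := injOn_separationMap.mono fun _ hs => hs.2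
  have hcard : #(separationMap q '' (X \ range q)) = #X := by
    rw [mk_image_eq_of_injOn _ _ hinj, mk_diff_of_countable hXunc (countable_range q)]
  refine ⟨_, ⟨?_, ?_, fun K hK hKc => ?_⟩, hcard⟩
  · rintro _ ⟨s, hs, rfl⟩
    exact infinite_separationMap hs.2
  · rwa [← le_aleph0_iff_set_countable, hcard, le_aleph0_iff_set_countable]
  · have hF : IsClosed (separationMap q ⁻¹' K) := hKc.isClosed.preimage continuous_separationMap
    have hDF : Disjoint D (separationMap q ⁻¹' K) := disjoint_left.mpr fun s hs hsK => by
      obtain ⟨j, rfl⟩ := hDq hs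
      exact hK hsK (finite_separationMap j)
    refine ((concentratedOn_iff_countable_inter.mp hXD _ hF hDF).image (separationMap q)).mono ?_
    rintro _ ⟨⟨s, hs, rfl⟩, hsK⟩
    exact mem_image_of_mem _ ⟨hs.1, hsK⟩

theorem KLusin.concentrated_union_finite {Y : Set (Set ℕ)} (hY : KLusin Y) :
    Concentrated (Y ∪ {s | s.Finite}) := by
  obtain ⟨-, hYunc, hYK⟩ := hY
  refine ⟨fun h => hYunc (h.mono subset_union_left), _, subset_union_right, countable_setOf_finite,
    concentratedOn_iff_countable_inter.mpr fun F hF hDF => ?_⟩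
  have hFinf : F ⊆ {s | s.Infinite} := fun s hs hfin => disjoint_left.mp hDF hfin hs
  refine (hYK F hFinf hF.isCompact).mono ?_
  rintro s ⟨hs | hs, hsF⟩
  · exact ⟨hs, hsF⟩
  · exact absurd hsF (disjoint_left.mp hDF hs)

theorem KLusin.exists_concentrated_mk_eq {Y : Set (Set ℕ)} (hY : KLusin Y) :
    ∃ X, Concentrated X ∧ #X = #Y :=
  ⟨_, hY.concentrated_union_finite, mk_union_of_countable hY.2.1 countable_setOf_finite⟩

theorem concentrated_iff_kLusin_general (κ : Cardinal) :
    (∃ X : Set (Set ℕ), Concentrated X ∧ Cardinal.mk X = κ) ↔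
      (∃ Y : Set (Set ℕ), KLusin Y ∧ Cardinal.mk Y = κ) := by
  constructor
  · rintro ⟨X, hX, rfl⟩
    exact hX.exists_kLusin_mk_eq
  · rintro ⟨Y, hY, rfl⟩
    exact hY.exists_concentrated_mk_eq

theorem concentrated_iff_kLusin (κ : Cardinal) (hκ : Cardinal.aleph0 < κ) :
    (∃ X : Set (Set ℕ), Concentrated X ∧ Cardinal.mk X = κ) ↔
      (∃ Y : Set (Set ℕ), KLusin Y ∧ Cardinal.mk Y = κ) :=
  concentrated_iff_kLusin_general κ
end

section
/- Let a ∈ ℕ^ℕ be strictly increasing and let v, s ⊆ ℕ be infinite with increasing enumerations e_v and e_s respectively. If v ⊆ s/a, then e_s(i) < a(e_v(i)+1) for every i ∈ ℕ. -/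
open Set

/-! Picking a point of `s` in the block `[a n, a (n + 1))` for each `n ∈ v`, in increasing order
of `n`, yields a strictly increasing sequence in `s` whose `i`-th term is below
`a (e_v i + 1)`; the enumeration `e_s` is the least strictly increasing sequence in `s`. -/

lemma strictMono_of_mem_Ico_blocks {a g f : ℕ → ℕ} (ha : Monotone a) (hg : StrictMono g)
    (hf : ∀ j, f j ∈ Ico (a (g j)) (a (g j + 1))) : StrictMono f := fun j k hjk =>
  calc f j < a (g j + 1) := (hf j).2
    _ ≤ a (g k) := ha (hg hjk)
    _ ≤ f k := (hf k).1

lemma nth_lt_of_inter_Ico_nonempty {a g : ℕ → ℕ} {s : Set ℕ} (ha : Monotone a)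
    (hg : StrictMono g) (hblock : ∀ j, (s ∩ Ico (a (g j)) (a (g j + 1))).Nonempty) (i : ℕ) :
    Nat.nth (· ∈ s) i < a (g i + 1) := by
  choose f hfs hf using hblock
  have hf_mono : StrictMono f := strictMono_of_mem_Ico_blocks ha hg hf
  calc Nat.nth (· ∈ s) i ≤ f i :=
        Nat.nth_le_of_strictMonoOn_of_mapsTo f (fun j _ => hfs j) (hf_mono.strictMonoOn _)
    _ < a (g i + 1) := (hf i).2

theorem enum_lt_of_subset_quotient_general (a : ℕ → ℕ) (ha : StrictMono a) (v s : Set ℕ)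
    (hv : v.Infinite)
    (hsub : v ⊆ {n : ℕ | (s ∩ Set.Ico (a n) (a (n + 1))).Nonempty}) :
    ∀ i : ℕ, Nat.nth (· ∈ s) i < a (Nat.nth (· ∈ v) i + 1) :=
  nth_lt_of_inter_Ico_nonempty ha.monotone (Nat.nth_strictMono hv)
    fun j => hsub (Nat.nth_mem_of_infinite hv j)

theorem enum_lt_of_subset_quotient (a : ℕ → ℕ) (ha : StrictMono a) (v s : Set ℕ)
    (hv : v.Infinite) (hs : s.Infinite)
    (hsub : v ⊆ {n : ℕ | (s ∩ Set.Ico (a n) (a (n + 1))).Nonempty}) :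
    ∀ i : ℕ, Nat.nth (· ∈ s) i < a (Nat.nth (· ∈ v) i + 1) :=
  enum_lt_of_subset_quotient_general a ha v s hv hsub
end

section
/- Let X ⊆ [ω]^ω be such that X ∪ Fin is a γ-set, and let a ∈ ℕ^ℕ be strictly increasing. Then there exists y ∈ [ω]^ω such that no x ∈ X satisfies x/a ⊆* y (where b ⊆* y means b ∖ y is finite). -/
open Filter Set

def IsOmegaCover {α : Type*} [TopologicalSpace α] (𝒰 : Set (Set α)) (X : Set α) : Prop :=
  (∀ V ∈ 𝒰, IsOpen V) ∧ X ∉ 𝒰 ∧ ∀ F : Set α, F ⊆ X → F.Finite → ∃ V ∈ 𝒰, F ⊆ V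

def IsGammaCover {α : Type*} (𝒰 : Set (Set α)) (X : Set α) : Prop :=
  𝒰.Infinite ∧ ∀ x ∈ X, {V ∈ 𝒰 | x ∉ V}.Finite

def GammaSet {α : Type*} [TopologicalSpace α] (X : Set α) : Prop :=
  ∀ 𝒰 : Set (Set α), IsOmegaCover 𝒰 X → ∃ 𝒱 ⊆ 𝒰, IsGammaCover 𝒱 X

/-!
Cover `X ∪ Fin` by open sets indexed by *windows*: a window is an interval `[lo, hi)` of block
indices with at most `lo` marked blocks, and `x` lies in its set when `x/a` misses the window or
meets a marked block. These sets form an ω-cover: given finitely many sets, take `lo` to be their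
number and mark, for each of them, one block beyond `lo` that it meets. Some block `j` of a window
is unmarked, and the finite set `{a j}` is not in the window's set, so `X ∪ Fin` is not a member.

In a γ-subcover the finite set `{a j}` lies in almost all members, so each block is unmarked in
only finitely many of its windows; as every window has an unmarked block below `2 lo`, this forces
`lo → ∞`, and the γ-subcover contains a sequence of windows lying one after the other. Let `y` be
the union of their unmarked blocks. Each `x ∈ X` lies in the sets of all late windows; if
`x/a ⊆* y`, the infinite set `x/a` meets `y` inside some late window, so it also meets a marked
block of that window, which lies outside `y` and beyond the finitely many blocks of `x/a \ y`.
-/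

open Function

lemma IsGammaCover.eventually_mem {α : Type*} {𝒱 : Set (Set α)} {Y : Set α}
    (h : IsGammaCover 𝒱 Y) {v : ℕ → Set α} (hv : Injective v) (hv𝒱 : ∀ k, v k ∈ 𝒱) {x : α}
    (hx : x ∈ Y) : ∀ᶠ k in atTop, x ∈ v k := by
  rw [← Nat.cofinite_eq_atTop]
  exact eventually_cofinite.2 (((h.2 x hx).preimage hv.injOn).subset fun k hk => ⟨hv𝒱 k, hk⟩)

namespace NoPseudounion

/-- The paper's `x/a`. -/
def blocks (a : ℕ → ℕ) (x : Set ℕ) : Set ℕ := {n | (x ∩ Ico (a n) (a (n + 1))).Nonempty}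

lemma isClopen_setOf_mem (p : ℕ) : IsClopen {x : Set ℕ | p ∈ x} := by
  have hχ : Continuous fun s : Set ℕ => fun n : ℕ => @decide (n ∈ s) (Classical.propDecidable _) :=
    continuous_induced_dom
  convert (isClopen_discrete {true}).preimage ((continuous_apply p).comp hχ)
  ext x
  simp

lemma isClopen_setOf_mem_blocks (a : ℕ → ℕ) (n : ℕ) :
    IsClopen {x : Set ℕ | n ∈ blocks a x} := by
  have : {x : Set ℕ | n ∈ blocks a x} = ⋃ p ∈ Ico (a n) (a (n + 1)), {x | p ∈ x} := by
    ext x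
    simp [blocks, Set.Nonempty, and_comm]
  rw [this]
  exact (finite_Ico _ _).isClopen_biUnion fun p _ => isClopen_setOf_mem p

variable {a : ℕ → ℕ}

lemma blocks_singleton (ha : StrictMono a) (j : ℕ) : blocks a {a j} = {j} := by
  ext n
  simp only [blocks, singleton_inter_nonempty, mem_Ico, ha.le_iff_le, ha.lt_iff_lt,
    Order.lt_add_one_iff, mem_ofPred_eq, mem_singleton_iff]
  omega

lemma exists_mem_Ico (ha : StrictMono a) {p : ℕ} (hp : a 0 ≤ p) :
    ∃ n, p ∈ Ico (a n) (a (n + 1)) := by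
  have : p ∈ Ico (a 0) (a (p + 1)) := ⟨hp, (Nat.lt_succ_self p).trans_le ha.le_apply⟩
  obtain ⟨n, -, hn⟩ := mem_iUnion₂.1 (Ico_subset_biUnion_Ico (p + 1) a this)
  exact ⟨n, hn⟩

lemma blocks_infinite (ha : StrictMono a) {x : Set ℕ} (hx : x.Infinite) :
    (blocks a x).Infinite := by
  refine fun hfin => hx (((finite_Iio (a 0)).union
    (hfin.biUnion fun n _ => finite_Ico (a n) (a (n + 1)))).subset fun p hp => ?_)
  rcases lt_or_ge p (a 0) with h | h
  · exact Or.inl h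
  · obtain ⟨n, hn⟩ := exists_mem_Ico ha h
    exact Or.inr (mem_biUnion ⟨p, hp, hn⟩ hn)

structure Window where
  lo : ℕ
  hi : ℕ
  marks : Finset ℕ
  marks_subset : marks ⊆ Finset.Ico lo hi
  card_marks_le : marks.card ≤ lo
  two_mul_lo_lt_hi : 2 * lo < hi

namespace Window

instance : Inhabited Window := ⟨⟨0, 1, ∅, Finset.empty_subset _, le_rfl, zero_lt_one⟩⟩

def gaps (w : Window) : Finset ℕ := Finset.Ico w.lo w.hi \ w.marks

def Admits (w : Window) (S : Set ℕ) : Prop := Disjoint S (Ico w.lo w.hi) ∨ ∃ j ∈ w.marks, j ∈ S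

def nbhd (a : ℕ → ℕ) (w : Window) : Set (Set ℕ) := {x | w.Admits (blocks a x)}

variable (w : Window)

lemma lo_lt_hi : w.lo < w.hi := by
  have := w.two_mul_lo_lt_hi
  omega

lemma exists_mem_gaps_le : ∃ j ∈ w.gaps, j ≤ 2 * w.lo := by
  have hcard : w.marks.card < (Finset.Ico w.lo (2 * w.lo + 1)).card := by
    rw [Nat.card_Ico]
    have := w.card_marks_le
    omega
  obtain ⟨j, hj, hjm⟩ := Finset.exists_mem_notMem_of_card_lt_card hcard
  have hj := Finset.mem_Ico.1 hj
  have := w.two_mul_lo_lt_hi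
  exact ⟨j, Finset.mem_sdiff.2 ⟨Finset.mem_Ico.2 ⟨hj.1, by omega⟩, hjm⟩, by omega⟩

lemma admits_singleton_iff {j : ℕ} : w.Admits {j} ↔ j ∉ w.gaps := by
  simp [Admits, gaps, or_iff_not_imp_left]

lemma isOpen_nbhd (a : ℕ → ℕ) : IsOpen (w.nbhd a) := by
  have : w.nbhd a = (⋂ j ∈ Ico w.lo w.hi, {x | j ∈ blocks a x}ᶜ) ∪
      ⋃ j ∈ w.marks, {x | j ∈ blocks a x} := by
    ext x
    simp [nbhd, Admits, Set.disjoint_right]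
  rw [this]
  exact ((finite_Ico _ _).isOpen_biInter fun j _ =>
    (isClopen_setOf_mem_blocks a j).compl.isOpen).union
      (isOpen_biUnion fun j _ => (isClopen_setOf_mem_blocks a j).isOpen)

lemma singleton_mem_nbhd_iff (ha : StrictMono a) {j : ℕ} : {a j} ∈ w.nbhd a ↔ j ∉ w.gaps := by
  show w.Admits (blocks a {a j}) ↔ _
  rw [blocks_singleton ha, admits_singleton_iff]

lemma exists_admits (𝒮 : Finset (Set ℕ)) : ∃ w : Window, ∀ S ∈ 𝒮, w.Admits S := by
  classical
  set m := 𝒮.card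
  let pick : Set ℕ → ℕ := fun S => if h : ∃ j ∈ S, m ≤ j then h.choose else m
  have pick_ge (S : Set ℕ) : m ≤ pick S := by
    unfold pick
    split_ifs with h
    exacts [h.choose_spec.2, le_rfl]
  have pick_mem {S : Set ℕ} (h : ∃ j ∈ S, m ≤ j) : pick S ∈ S := by
    simp only [pick, dif_pos h]
    exact h.choose_spec.1
  let marks := 𝒮.image pick
  refine ⟨⟨m, 2 * m + 1 + marks.sup id, marks, fun j hj => ?_, Finset.card_image_le, by omega⟩,
    fun S hS => ?_⟩
  · obtain ⟨S, -, rfl⟩ := Finset.mem_image.1 hj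
    have := Finset.le_sup (f := id) hj
    exact Finset.mem_Ico.2 ⟨pick_ge S, by simp only [id] at this; omega⟩
  · by_cases h : ∃ j ∈ S, m ≤ j
    · exact Or.inr ⟨pick S, Finset.mem_image_of_mem _ hS, pick_mem h⟩
    · push Not at h
      exact Or.inl (disjoint_left.2 fun j hj hj' => (h j hj).not_ge hj'.1)

end Window

open Window

theorem isOmegaCover_range_nbhd (ha : StrictMono a) (X : Set (Set ℕ)) :
    IsOmegaCover (range (nbhd a)) (X ∪ {s | s.Finite}) := by
  refine ⟨?_, ?_, fun F _ hF => ?_⟩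
  · rintro _ ⟨w, rfl⟩
    exact w.isOpen_nbhd a
  · rintro ⟨w, hw⟩
    obtain ⟨j, hj, -⟩ := w.exists_mem_gaps_le
    have : {a j} ∈ w.nbhd a := hw ▸ Or.inr (finite_singleton _)
    exact (w.singleton_mem_nbhd_iff ha).1 this hj
  · obtain ⟨w, hw⟩ := exists_admits (hF.toFinset.image (blocks a))
    exact ⟨_, mem_range_self w, fun x hx =>
      hw _ (Finset.mem_image_of_mem _ (hF.mem_toFinset.2 hx))⟩

lemma exists_lo_ge {ι : Type*} {s : Set ι} (hs : s.Infinite) (f : ι → Window)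
    (hgap : ∀ j, {i ∈ s | j ∈ (f i).gaps}.Finite) (N : ℕ) : ∃ i ∈ s, N ≤ (f i).lo := by
  have hfin : {i ∈ s | (f i).lo < N}.Finite :=
    ((finite_Iio (2 * N)).biUnion fun j _ => hgap j).subset fun i ⟨hi, hlo⟩ => by
      obtain ⟨j, hj, hjlo⟩ := (f i).exists_mem_gaps_le
      exact mem_biUnion (show j < 2 * N by omega) ⟨hi, hj⟩
  obtain ⟨i, his, hi⟩ := (hs.sdiff hfin).nonempty
  exact ⟨i, his, not_lt.1 fun h => hi ⟨his, h⟩⟩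

lemma exists_seq_hi_le_lo {ι : Type*} {s : Set ι} (hs : s.Infinite) (f : ι → Window)
    (hgap : ∀ j, {i ∈ s | j ∈ (f i).gaps}.Finite) :
    ∃ v : ℕ → ι, (∀ k, v k ∈ s) ∧ ∀ k, (f (v k)).hi ≤ (f (v (k + 1))).lo := by
  choose g hgs hg using exists_lo_ge hs f hgap
  refine ⟨fun k => Nat.rec (g 0) (fun _ i => g (f i).hi) k, fun k => ?_, fun k => hg _⟩
  cases k <;> exact hgs _

def gapUnion (w : ℕ → Window) : Set ℕ := ⋃ k, ((w k).gaps : Set ℕ)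

section Chain

variable {w : ℕ → Window} (hw : ∀ k, (w k).hi ≤ (w (k + 1)).lo)
include hw

lemma lo_strictMono : StrictMono fun k => (w k).lo :=
  strictMono_nat_of_lt_succ fun k => (w k).lo_lt_hi.trans_le (hw k)

lemma hi_le_lo_of_lt {k l : ℕ} (hkl : k < l) : (w k).hi ≤ (w l).lo := by
  induction l, hkl using Nat.le_induction with
  | base => exact hw k
  | succ l _ ih => exact ih.trans ((lo_strictMono hw).monotone l.le_succ)

lemma eq_of_mem_Ico_of_mem_Ico {k l j : ℕ} (hk : j ∈ Finset.Ico (w k).lo (w k).hi)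
    (hl : j ∈ Finset.Ico (w l).lo (w l).hi) : k = l := by
  rw [Finset.mem_Ico] at hk hl
  rcases lt_trichotomy k l with h | h | h
  · have := hi_le_lo_of_lt hw h
    omega
  · exact h
  · have := hi_le_lo_of_lt hw h
    omega

lemma gapUnion_infinite : (gapUnion w).Infinite := by
  refine infinite_of_not_bddAbove fun ⟨B, hB⟩ => ?_
  obtain ⟨j, hj, -⟩ := (w (B + 1)).exists_mem_gaps_le
  have hjB := hB (mem_iUnion.2 ⟨B + 1, hj⟩)
  have hlo : B + 1 ≤ (w (B + 1)).lo := (lo_strictMono hw).le_apply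
  have := (Finset.mem_Ico.1 (Finset.mem_sdiff.1 hj).1).1
  omega

lemma notMem_gapUnion_of_mem_marks {k j : ℕ} (hj : j ∈ (w k).marks) : j ∉ gapUnion w := by
  simp only [gapUnion, mem_iUnion, Finset.mem_coe, not_exists]
  intro l hjl
  obtain ⟨hjl, hjm⟩ := Finset.mem_sdiff.1 hjl
  obtain rfl := eq_of_mem_Ico_of_mem_Ico hw ((w k).marks_subset hj) hjl
  exact hjm hj

theorem infinite_diff_gapUnion {S : Set ℕ} (hS : S.Infinite)
    (hadm : ∀ᶠ k in atTop, (w k).Admits S) : (S \ gapUnion w).Infinite := by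
  intro hfin
  obtain ⟨K, hK⟩ := eventually_atTop.1 hadm
  obtain ⟨r, hr⟩ := hfin.bddAbove
  set K' := max K (r + 1)
  have hSy : (S ∩ gapUnion w).Infinite := by
    simpa only [sdiff_sdiff_right_self] using hS.sdiff hfin
  obtain ⟨j, ⟨hjS, hjy⟩, hjK'⟩ := hSy.exists_gt (w K').lo
  obtain ⟨k, hjk⟩ := mem_iUnion.1 hjy
  obtain ⟨hjw, -⟩ := Finset.mem_sdiff.1 hjk
  rw [Finset.mem_Ico] at hjw
  have hkK' : K' ≤ k := not_lt.1 fun h => by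
    have := hi_le_lo_of_lt hw h
    omega
  rcases hK k (le_of_max_le_left hkK') with hdisj | ⟨j', hj'm, hj'S⟩
  · exact disjoint_left.1 hdisj hjS hjw
  · have hj'r : j' ≤ r := hr ⟨hj'S, notMem_gapUnion_of_mem_marks hw hj'm⟩
    have hklo : k ≤ (w k).lo := (lo_strictMono hw).le_apply
    have := Finset.mem_Ico.1 ((w k).marks_subset hj'm)
    omega

end Chain

end NoPseudounion

open NoPseudounion Window

theorem gammaSet_no_pseudounion (X : Set (Set ℕ)) (hX : ∀ x ∈ X, x.Infinite)
    (hγ : GammaSet (X ∪ {s : Set ℕ | s.Finite})) (a : ℕ → ℕ) (ha : StrictMono a) :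
    ∃ y : Set ℕ, y.Infinite ∧
      ∀ x ∈ X, ¬ ({n : ℕ | (x ∩ Set.Ico (a n) (a (n + 1))).Nonempty} \ y).Finite := by
  obtain ⟨𝒱, h𝒱, h𝒱γ⟩ := hγ _ (isOmegaCover_range_nbhd ha X)
  choose! win hwin using fun V (hV : V ∈ 𝒱) => h𝒱 hV
  have hgap : ∀ j, {V ∈ 𝒱 | j ∈ (win V).gaps}.Finite := fun j =>
    (h𝒱γ.2 {a j} (Or.inr (finite_singleton _))).subset fun V ⟨hV, hj⟩ =>
      ⟨hV, by rwa [← hwin V hV, singleton_mem_nbhd_iff _ ha, not_not]⟩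
  obtain ⟨v, hv𝒱, hchain⟩ := exists_seq_hi_le_lo h𝒱γ.1 win hgap
  have hv : Injective v := (lo_strictMono (w := win ∘ v) hchain).injective.of_comp.of_comp
  refine ⟨gapUnion (win ∘ v), gapUnion_infinite hchain, fun x hx => ?_⟩
  refine infinite_diff_gapUnion hchain (blocks_infinite ha (hX x hx)) ?_
  filter_upwards [h𝒱γ.eventually_mem hv hv𝒱 (Or.inl hx)] with k hk
  rw [← hwin _ (hv𝒱 k)] at hk
  exact hk
end

section
/- Let X ⊆ P(ω) with Fin ⊆ X, and let A ⊆ ℕ^ℕ be a family such that every infinite x ∈ X has its increasing enumeration ≤* some a ∈ A. Then for every x ∈ X: x is finite if and only if for every a ∈ A and every n ∈ ℕ there is m ≥ n with x ∩ [m, a(m)+1) = ∅. In particular, Fin = X ∩ ⋂_{a∈A} ⋂_{n∈ℕ} ⋃_{m≥n} {x ∈ P(ω) : x ∩ [m, a(m)+1) = ∅}, where each set ⋃_{m≥n} {x : x ∩ [m, a(m)+1) = ∅} is open in P(ω). -/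
open Filter Set

/-!
A finite set misses every interval beyond its maximum. An infinite set `x` whose enumeration is
eventually below `a` meets every late interval `[m, a(m)]`, since its `m`-th element lies there.
Each condition `x ∩ [m, a(m)] = ∅` constrains finitely many coordinates, hence is open.
-/

theorem Set.Finite.exists_ge_inter_Ico_eq_empty {x : Set ℕ} (hx : x.Finite) (n : ℕ)
    (f : ℕ → ℕ) : ∃ m ≥ n, x ∩ Ico m (f m) = ∅ := by
  obtain ⟨b, hb⟩ := hx.bddAbove
  refine ⟨max n (b + 1), le_max_left _ _, eq_empty_of_forall_notMem ?_⟩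
  rintro y ⟨hyx, hy, -⟩
  have := hb hyx
  omega

theorem Set.Infinite.nth_mem_inter_Ico {x : Set ℕ} (hx : x.Infinite) {m b : ℕ}
    (hb : Nat.nth (· ∈ x) m ≤ b) : Nat.nth (· ∈ x) m ∈ x ∩ Ico m (b + 1) :=
  ⟨Nat.nth_mem_of_infinite hx m, Nat.le_nth fun hf => (hx hf).elim, Nat.lt_succ_of_le hb⟩

theorem finite_iff_forall_exists_inter_Ico_eq_empty {x : Set ℕ} {A : Set (ℕ → ℕ)}
    (hA : x.Infinite → ∃ a ∈ A, ∀ᶠ n in atTop, Nat.nth (· ∈ x) n ≤ a n) :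
    x.Finite ↔ ∀ a ∈ A, ∀ n : ℕ, ∃ m ≥ n, x ∩ Ico m (a m + 1) = ∅ := by
  refine ⟨fun hfin a _ n => hfin.exists_ge_inter_Ico_eq_empty n _, fun h => ?_⟩
  by_contra hinf
  obtain ⟨a, haA, ha⟩ := hA hinf
  obtain ⟨N, hN⟩ := eventually_atTop.mp ha
  obtain ⟨m, hm, hempty⟩ := h a haA N
  have hmem := Set.Infinite.nth_mem_inter_Ico hinf (hN m hm)
  rw [hempty] at hmem
  exact hmem

theorem isOpen_setOf_notMem (i : ℕ) : IsOpen {x : Set ℕ | i ∉ x} := by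
  refine isOpen_induced_iff.mpr ⟨{f | f i = false}, ?_, ?_⟩
  · exact (continuous_apply (A := fun _ : ℕ => Bool) i).isOpen_preimage {false}
      (isOpen_discrete _)
  · ext x
    simp

theorem isOpen_setOf_inter_eq_empty {s : Set ℕ} (hs : s.Finite) :
    IsOpen {x : Set ℕ | x ∩ s = ∅} := by
  have : {x : Set ℕ | x ∩ s = ∅} = ⋂ i ∈ s, {x | i ∉ x} := by
    ext x
    simp [eq_empty_iff_forall_notMem, imp_not_comm]
  rw [this]
  exact hs.isOpen_biInter fun i _ => isOpen_setOf_notMem i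

theorem fin_GOmega1 (X : Set (Set ℕ)) (hFin : {s : Set ℕ | s.Finite} ⊆ X) (A : Set (ℕ → ℕ))
    (hA : ∀ x ∈ X, x.Infinite → ∃ a ∈ A, ∀ᶠ n in atTop, Nat.nth (· ∈ x) n ≤ a n) :
    (∀ x ∈ X, (x.Finite ↔ ∀ a ∈ A, ∀ n : ℕ, ∃ m ≥ n, x ∩ Set.Ico m (a m + 1) = ∅)) ∧
    ({s : Set ℕ | s.Finite} =
      X ∩ ⋂ a ∈ A, ⋂ n : ℕ, ⋃ m, ⋃ (_ : n ≤ m), {x : Set ℕ | x ∩ Set.Ico m (a m + 1) = ∅}) ∧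
    (∀ a ∈ A, ∀ n : ℕ,
      IsOpen (⋃ m, ⋃ (_ : n ≤ m), {x : Set ℕ | x ∩ Set.Ico m (a m + 1) = ∅})) := by
  have key : ∀ x ∈ X, (x.Finite ↔ ∀ a ∈ A, ∀ n : ℕ, ∃ m ≥ n, x ∩ Ico m (a m + 1) = ∅) :=
    fun x hx => finite_iff_forall_exists_inter_Ico_eq_empty (hA x hx)
  refine ⟨key, ?_, fun a _ n => isOpen_biUnion fun m _ => isOpen_setOf_inter_eq_empty
    (finite_Ico _ _)⟩
  ext s
  simp only [mem_inter_iff, mem_iInter, mem_iUnion, exists_prop]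
  exact ⟨fun hs => ⟨hFin hs, (key s (hFin hs)).mp hs⟩, fun ⟨hsX, h⟩ => (key s hsX).mpr h⟩
end

section
/- The Cantor space is countable dense homogeneous: for any two countable dense subsets D₀ and D₁ of 2^ℕ, there exists a homeomorphism h : 2^ℕ → 2^ℕ with h[D₀] = D₁. -/
/-!
Back and forth. An approximation of level `ℓ` is a permutation `σ` of the cylinders of length `ℓ`
together with finitely many pairs `(a, b) ∈ D₀ × D₁` lying in distinct cylinders, such that `σ`
maps the cylinder of `a` to that of `b`. An approximation can be refined to level `ℓ + 1` keeping
its pairs, and, by density, extended by a pair with a prescribed first coordinate in `D₀` (refine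
until that point is alone in its cylinder, then choose its partner in `D₁` inside the image
cylinder), or symmetrically a prescribed second coordinate in `D₁`. Meeting these countably many
requirements one after the other gives an increasing sequence of approximations, whose coherent
permutations define a homeomorphism sending the first coordinate of every pair to the second.
-/

open Set Filter Function Equiv

namespace PiNat

variable {α : Type*}

def take (n : ℕ) (x : ℕ → α) : Fin n → α := fun i => x i

theorem take_mem_cylinder_iff {x y : ℕ → α} {n : ℕ} :
    y ∈ cylinder x n ↔ take n y = take n x := by
  simp [mem_cylinder_iff, funext_iff, take, Fin.forall_iff]

theorem take_succ (n : ℕ) (x : ℕ → α) : take (n + 1) x = Fin.snoc (take n x) (x n) :=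
  (Fin.snoc_init_self _).symm

theorem take_surjective [Nonempty α] (n : ℕ) : Surjective (take n : (ℕ → α) → Fin n → α) :=
  fun t => ⟨extend Fin.val t fun _ => Classical.arbitrary α,
    funext fun i => Fin.val_injective.extend_apply t _ i⟩

theorem eventually_take_ne {x y : ℕ → α} (h : x ≠ y) : ∀ᶠ n in atTop, take n x ≠ take n y := by
  obtain ⟨i, hi⟩ := ne_iff.1 h
  filter_upwards [eventually_gt_atTop i] with n hn htake
  exact hi (congrFun htake ⟨i, hn⟩)

theorem eq_of_eventually_take_eq {ℓ : ℕ → ℕ} (hℓ : Tendsto ℓ atTop atTop) {x y : ℕ → α}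
    (h : ∀ᶠ n in atTop, take (ℓ n) x = take (ℓ n) y) : x = y := by
  by_contra hne
  obtain ⟨n, hn, hne⟩ := (h.and (hℓ.eventually (eventually_take_ne hne))).exists
  exact hne hn

theorem continuous_take [TopologicalSpace α] (n : ℕ) :
    Continuous (take n : (ℕ → α) → Fin n → α) :=
  continuous_pi fun i => continuous_apply (i : ℕ)

theorem _root_.Dense.exists_take_eq [TopologicalSpace α] [DiscreteTopology α] [Nonempty α]
    {D : Set (ℕ → α)} (hD : Dense D) {n : ℕ} (t : Fin n → α) : ∃ y ∈ D, take n y = t := by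
  obtain ⟨x, rfl⟩ := take_surjective n t
  obtain ⟨y, hy, hyD⟩ :=
    hD.inter_open_nonempty _ (isOpen_cylinder _ x n) ⟨x, self_mem_cylinder x n⟩
  exact ⟨y, hyD, take_mem_cylinder_iff.1 hy⟩

section Refines

variable {m n k : ℕ}

def Refines (τ : Perm (Fin n → α)) (σ : Perm (Fin m → α)) : Prop :=
  ∃ h : m ≤ n, ∀ s, Fin.take m h (τ s) = σ (Fin.take m h s)

theorem Refines.refl (σ : Perm (Fin n → α)) : Refines σ σ :=
  ⟨le_rfl, fun s => by simp only [Fin.take_eq_self]⟩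

theorem Refines.trans {ρ : Perm (Fin k → α)} {τ : Perm (Fin n → α)} {σ : Perm (Fin m → α)}
    (hρ : Refines ρ τ) (hτ : Refines τ σ) : Refines ρ σ :=
  ⟨hτ.1.trans hρ.1, fun s => by
    rw [← Fin.take_take hτ.1 hρ.1, hρ.2, hτ.2, Fin.take_take]⟩

theorem Refines.symm {τ : Perm (Fin n → α)} {σ : Perm (Fin m → α)} (h : Refines τ σ) :
    Refines τ.symm σ.symm :=
  ⟨h.1, fun s => by
    rw [eq_comm, Equiv.symm_apply_eq, ← h.2, Equiv.apply_symm_apply]⟩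

theorem Refines.apply_take {τ : Perm (Fin n → α)} {σ : Perm (Fin m → α)} (h : Refines τ σ)
    (x : ℕ → α) {i : ℕ} (hm : i < m) (hn : i < n) :
    τ (take n x) ⟨i, hn⟩ = σ (take m x) ⟨i, hm⟩ :=
  congrFun (h.2 (take n x)) ⟨i, hm⟩

end Refines

def snocPerm {n : ℕ} (σ : Perm (Fin n → α)) (τ : (Fin n → α) → Perm α) :
    Perm (Fin (n + 1) → α) where
  toFun s := Fin.snoc (σ (Fin.init s)) (τ (Fin.init s) (s (Fin.last n)))
  invFun s := Fin.snoc (σ.symm (Fin.init s)) ((τ (σ.symm (Fin.init s))).symm (s (Fin.last n)))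
  left_inv s := by simp
  right_inv s := by simp

theorem snocPerm_snoc {n : ℕ} (σ : Perm (Fin n → α)) (τ : (Fin n → α) → Perm α)
    (t : Fin n → α) (a : α) : snocPerm σ τ (Fin.snoc t a) = Fin.snoc (σ t) (τ t a) := by
  simp [snocPerm]

theorem refines_snocPerm {n : ℕ} (σ : Perm (Fin n → α)) (τ : (Fin n → α) → Perm α) :
    Refines (snocPerm σ τ) σ :=
  ⟨n.le_succ, fun s => by simp [snocPerm]⟩

section Limit

variable {ℓ : ℕ → ℕ} {σ : ∀ n, Perm (Fin (ℓ n) → α)}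

variable (σ) in
noncomputable def limitMap (hℓ : Tendsto ℓ atTop atTop) (x : ℕ → α) (i : ℕ) : α :=
  σ _ (take _ x) ⟨i, (hℓ.eventually_gt_atTop i).exists.choose_spec⟩

theorem take_limitMap (hℓ : Tendsto ℓ atTop atTop) (hσ : ∀ m n, m ≤ n → Refines (σ n) (σ m))
    (n : ℕ) (x : ℕ → α) : take (ℓ n) (limitMap σ hℓ x) = σ n (take (ℓ n) x) := by
  funext ⟨i, hi⟩
  rcases le_total (hℓ.eventually_gt_atTop i).exists.choose n with h | h
  · exact ((hσ _ _ h).apply_take x _ hi).symm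
  · exact (hσ _ _ h).apply_take x hi _

variable [TopologicalSpace α] [DiscreteTopology α]

theorem continuous_limitMap (hℓ : Tendsto ℓ atTop atTop) : Continuous (limitMap σ hℓ) :=
  continuous_pi fun i =>
    (continuous_of_discreteTopology (f := fun t : Fin (ℓ _) → α => σ _ t ⟨i, _⟩)).comp
      (continuous_take _)

theorem exists_homeomorph_take_eq (hℓ : Tendsto ℓ atTop atTop)
    (hσ : ∀ m n, m ≤ n → Refines (σ n) (σ m)) :
    ∃ h : (ℕ → α) ≃ₜ (ℕ → α), ∀ n x, take (ℓ n) (h x) = σ n (take (ℓ n) x) := by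
  have hσ' : ∀ m n, m ≤ n → Refines (σ n).symm (σ m).symm := fun m n h => (hσ m n h).symm
  refine ⟨{ toFun := limitMap σ hℓ
            invFun := limitMap (fun n => (σ n).symm) hℓ
            left_inv := fun x => eq_of_eventually_take_eq hℓ <| .of_forall fun n => ?_
            right_inv := fun y => eq_of_eventually_take_eq hℓ <| .of_forall fun n => ?_
            continuous_toFun := continuous_limitMap hℓ
            continuous_invFun := continuous_limitMap hℓ }, take_limitMap hℓ hσ⟩
  · rw [take_limitMap hℓ hσ', take_limitMap hℓ hσ, Equiv.symm_apply_apply]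
  · rw [take_limitMap hℓ hσ, take_limitMap hℓ hσ', Equiv.apply_symm_apply]

end Limit

structure Approx (D₀ D₁ : Set (ℕ → α)) where
  level : ℕ
  perm : Perm (Fin level → α)
  pairs : Set ((ℕ → α) × (ℕ → α))
  finite_pairs : pairs.Finite
  pairs_subset : pairs ⊆ D₀ ×ˢ D₁
  perm_take : ∀ p ∈ pairs, perm (take level p.1) = take level p.2
  injOn_take_fst : pairs.InjOn fun p => take level p.1

namespace Approx

variable {D₀ D₁ : Set (ℕ → α)}

instance : Inhabited (Approx D₀ D₁) :=
  ⟨{ level := 0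
     perm := 1
     pairs := ∅
     finite_pairs := finite_empty
     pairs_subset := empty_subset _
     perm_take := fun _ h => h.elim
     injOn_take_fst := injOn_empty _ }⟩

instance : Preorder (Approx D₀ D₁) where
  le S T := Refines T.perm S.perm ∧ S.pairs ⊆ T.pairs
  le_refl S := ⟨.refl _, subset_rfl⟩
  le_trans _ _ _ hST hTU := ⟨hTU.1.trans hST.1, hST.2.trans hTU.2⟩

theorem level_mono {S T : Approx D₀ D₁} (h : S ≤ T) : S.level ≤ T.level :=
  h.1.1

theorem pairs_mono {S T : Approx D₀ D₁} (h : S ≤ T) : S.pairs ⊆ T.pairs :=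
  h.2

def symm (S : Approx D₀ D₁) : Approx D₁ D₀ where
  level := S.level
  perm := S.perm.symm
  pairs := Prod.swap ⁻¹' S.pairs
  finite_pairs := S.finite_pairs.preimage Prod.swap_injective.injOn
  pairs_subset _ hp := (S.pairs_subset hp).symm
  perm_take p hp := by rw [Equiv.symm_apply_eq]; exact (S.perm_take _ hp).symm
  injOn_take_fst p hp q hq h := Prod.swap_injective <| S.injOn_take_fst hp hq <|
    S.perm.injective <| by rw [S.perm_take _ hp, S.perm_take _ hq]; exact h

theorem symm_le_symm {S T : Approx D₀ D₁} (h : S ≤ T) : S.symm ≤ T.symm :=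
  ⟨h.1.symm, preimage_mono h.2⟩

open Classical in
/-- Inside the cylinder of a pair `(a, b)`, the letters `a ℓ` and `b ℓ` are swapped, so that the
pair stays matched at level `ℓ + 1`. -/
noncomputable def splitPerm (S : Approx D₀ D₁) (t : Fin S.level → α) : Perm α :=
  if h : ∃ p ∈ S.pairs, take S.level p.1 = t then
    swap (h.choose.1 S.level) (h.choose.2 S.level)
  else 1

theorem splitPerm_take {S : Approx D₀ D₁} {p : (ℕ → α) × (ℕ → α)} (hp : p ∈ S.pairs) :
    S.splitPerm (take S.level p.1) (p.1 S.level) = p.2 S.level := by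
  classical
  have h : ∃ q ∈ S.pairs, take S.level q.1 = take S.level p.1 := ⟨p, hp, rfl⟩
  rw [splitPerm, dif_pos h, S.injOn_take_fst h.choose_spec.1 hp h.choose_spec.2, swap_apply_left]

noncomputable def split (S : Approx D₀ D₁) : Approx D₀ D₁ where
  level := S.level + 1
  perm := snocPerm S.perm S.splitPerm
  pairs := S.pairs
  finite_pairs := S.finite_pairs
  pairs_subset := S.pairs_subset
  perm_take p hp := by
    rw [take_succ, take_succ, snocPerm_snoc, S.perm_take p hp, splitPerm_take hp]
  injOn_take_fst := S.injOn_take_fst.of_comp (g := Fin.init)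

theorem le_split (S : Approx D₀ D₁) : S ≤ S.split :=
  ⟨refines_snocPerm _ _, subset_rfl⟩

theorem exists_le_level_eq_add (S : Approx D₀ D₁) (k : ℕ) :
    ∃ T, S ≤ T ∧ T.level = S.level + k ∧ T.pairs = S.pairs := by
  induction k with
  | zero => exact ⟨S, le_rfl, rfl, rfl⟩
  | succ k ih =>
    obtain ⟨T, hST, hlevel, hpairs⟩ := ih
    exact ⟨T.split, hST.trans T.le_split, by rw [← add_assoc, ← hlevel]; rfl, hpairs⟩

def addPair (S : Approx D₀ D₁) {a b : ℕ → α} (hab : (a, b) ∈ D₀ ×ˢ D₁)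
    (hperm : S.perm (take S.level a) = take S.level b)
    (hfree : ∀ p ∈ S.pairs, take S.level p.1 ≠ take S.level a) : Approx D₀ D₁ where
  level := S.level
  perm := S.perm
  pairs := insert (a, b) S.pairs
  finite_pairs := S.finite_pairs.insert _
  pairs_subset := insert_subset hab S.pairs_subset
  perm_take := forall_mem_insert.2 ⟨hperm, S.perm_take⟩
  injOn_take_fst := by
    refine (injOn_insert fun hmem => hfree _ hmem rfl).2 ⟨S.injOn_take_fst, ?_⟩
    rintro ⟨p, hp, h⟩
    exact hfree p hp h

theorem le_addPair (S : Approx D₀ D₁) {a b : ℕ → α} (hab : (a, b) ∈ D₀ ×ˢ D₁)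
    (hperm : S.perm (take S.level a) = take S.level b)
    (hfree : ∀ p ∈ S.pairs, take S.level p.1 ≠ take S.level a) :
    S ≤ S.addPair hab hperm hfree :=
  ⟨.refl _, subset_insert _ _⟩

theorem isCofinal_level_ge (n : ℕ) : IsCofinal {T : Approx D₀ D₁ | n ≤ T.level} := fun S =>
  let ⟨T, hST, hlevel, _⟩ := S.exists_le_level_eq_add n
  ⟨T, show n ≤ T.level by omega, hST⟩

theorem isCofinal_mem_pairs_fst [TopologicalSpace α] [DiscreteTopology α] (hD₁ : Dense D₁)
    {a : ℕ → α} (ha : a ∈ D₀) : IsCofinal {T : Approx D₀ D₁ | ∃ b, (a, b) ∈ T.pairs} := by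
  intro S
  by_cases hmem : ∃ b, (a, b) ∈ S.pairs
  · exact ⟨S, hmem, le_rfl⟩
  have hne : ∀ p ∈ S.pairs, p.1 ≠ a := fun p hp hpa => hmem ⟨p.2, hpa ▸ hp⟩
  obtain ⟨N, hN⟩ := eventually_atTop.1 <|
    (eventually_all_finite S.finite_pairs).2 fun p hp => eventually_take_ne (hne p hp)
  obtain ⟨T, hST, hlevel, hpairs⟩ := S.exists_le_level_eq_add N
  have hfree : ∀ p ∈ T.pairs, take T.level p.1 ≠ take T.level a :=
    hpairs ▸ hlevel ▸ hN _ (Nat.le_add_left N S.level)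
  have : Nonempty α := ⟨a 0⟩
  obtain ⟨b, hb, hbtake⟩ := hD₁.exists_take_eq (T.perm (take T.level a))
  exact ⟨T.addPair ⟨ha, hb⟩ hbtake.symm hfree, ⟨b, mem_insert _ _⟩,
    hST.trans (T.le_addPair _ _ _)⟩

theorem isCofinal_mem_pairs_snd [TopologicalSpace α] [DiscreteTopology α] (hD₀ : Dense D₀)
    {b : ℕ → α} (hb : b ∈ D₁) : IsCofinal {T : Approx D₀ D₁ | ∃ a, (a, b) ∈ T.pairs} := by
  intro S
  obtain ⟨T, hT, hST⟩ := isCofinal_mem_pairs_fst hD₀ hb S.symm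
  exact ⟨T.symm, hT, symm_le_symm hST⟩

variable [TopologicalSpace α] [DiscreteTopology α]

theorem exists_monotone_seq (hD₀c : D₀.Countable) (hD₁c : D₁.Countable) (hD₀ : Dense D₀)
    (hD₁ : Dense D₁) :
    ∃ s : ℕ → Approx D₀ D₁, Monotone s ∧ Tendsto (fun n => (s n).level) atTop atTop ∧
      (∀ a ∈ D₀, ∃ n b, (a, b) ∈ (s n).pairs) ∧ (∀ b ∈ D₁, ∃ n a, (a, b) ∈ (s n).pairs) := by
  have := hD₀c.to_subtype
  have := hD₁c.to_subtype
  let 𝒟 : D₀ ⊕ D₁ ⊕ ℕ → Order.Cofinal (Approx D₀ D₁)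
    | .inl a => ⟨_, isCofinal_mem_pairs_fst hD₁ a.2⟩
    | .inr (.inl b) => ⟨_, isCofinal_mem_pairs_snd hD₀ b.2⟩
    | .inr (.inr n) => ⟨_, isCofinal_level_ge n⟩
  let _ := Encodable.ofCountable (D₀ ⊕ D₁ ⊕ ℕ)
  let s := Order.sequenceOfCofinals default 𝒟
  have hs : Monotone s := Order.sequenceOfCofinals.monotone _ _
  have hmem (i) : s (Encodable.encode i + 1) ∈ 𝒟 i := Order.sequenceOfCofinals.encode_mem _ _ i
  have hlevel (n : ℕ) : n ≤ (s (Encodable.encode (.inr (.inr n) : D₀ ⊕ D₁ ⊕ ℕ) + 1)).level :=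
    hmem (.inr (.inr n))
  exact ⟨s, hs,
    tendsto_atTop_atTop.2 fun n => ⟨_, fun m hm => (hlevel n).trans (level_mono (hs hm))⟩,
    fun a ha => ⟨_, hmem (.inl ⟨a, ha⟩)⟩, fun b hb => ⟨_, hmem (.inr (.inl ⟨b, hb⟩))⟩⟩

theorem exists_homeomorph_of_monotone {s : ℕ → Approx D₀ D₁} (hs : Monotone s)
    (hlevel : Tendsto (fun n => (s n).level) atTop atTop) :
    ∃ h : (ℕ → α) ≃ₜ (ℕ → α), ∀ n, ∀ p ∈ (s n).pairs, h p.1 = p.2 := by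
  obtain ⟨h, hh⟩ := exists_homeomorph_take_eq (σ := fun n => (s n).perm) hlevel
    fun _ _ hmn => (hs hmn).1
  refine ⟨h, fun n p hp => eq_of_eventually_take_eq hlevel ?_⟩
  filter_upwards [eventually_ge_atTop n] with m hm
  rw [hh, (s m).perm_take p (pairs_mono (hs hm) hp)]

end Approx

end PiNat

theorem cantor_countable_dense_homogeneous (D₀ D₁ : Set (ℕ → Bool))
    (hD₀c : D₀.Countable) (hD₁c : D₁.Countable) (hD₀d : Dense D₀) (hD₁d : Dense D₁) :
    ∃ h : (ℕ → Bool) ≃ₜ (ℕ → Bool), h '' D₀ = D₁ := by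
  obtain ⟨s, hs, hlevel, hD₀s, hD₁s⟩ := PiNat.Approx.exists_monotone_seq hD₀c hD₁c hD₀d hD₁d
  obtain ⟨h, hh⟩ := PiNat.Approx.exists_homeomorph_of_monotone hs hlevel
  refine ⟨h, Subset.antisymm ?_ fun b hb => ?_⟩
  · rintro _ ⟨a, ha, rfl⟩
    obtain ⟨n, b, hab⟩ := hD₀s a ha
    rw [hh n _ hab]
    exact ((s n).pairs_subset hab).2
  · obtain ⟨n, a, hab⟩ := hD₁s b hb
    exact ⟨a, ((s n).pairs_subset hab).1, hh n _ hab⟩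
end
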